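/- For ν a probability measure on [0,∞) with atom δ = ν({0}) < 1, the S-transform satisfies S_ν(m²/V_ν(m)) = 1/m for all m in the domain of means (m₋(ν), m₀(ν)). -/

import Mathlib

open MeasureTheory Set Filter Topology ENNReal

noncomputable section

/-- Cauchy-Stieltjes moment-type transform `M_ν(θ) = ∫ 1/(1-θx) dν(x)`. -/
def Mcs (ν : Measure ℝ) (θ : ℝ) : ℝ := ∫ x, 1 / (1 - θ * x) ∂ν

/-- The mean map `k_ν(θ) = (M_ν(θ) - 1)/(θ M_ν(θ))`. -/
def kcs (ν : Measure ℝ) (θ : ℝ) : ℝ := (Mcs ν θ - 1) / (θ * Mcs ν θ)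

/-- The Cauchy transform `G_ν(z) = ∫ 1/(z-x) dν(x)`. -/
def Gcs (ν : Measure ℝ) (z : ℝ) : ℝ := ∫ x, 1 / (z - x) ∂ν

/-- `Ψ_ν(z) = ∫ zx/(1-zx) dν(x)`. -/
def PsiT (ν : Measure ℝ) (z : ℝ) : ℝ := ∫ x, z * x / (1 - z * x) ∂ν

/-- Topological support of a measure on ℝ. -/
def msupp (ν : Measure ℝ) : Set ℝ := {x | ∀ U ∈ 𝓝 x, ν U ≠ 0}

/-- The natural parameter domain `(θ₋, θ₊) \ {0}`: nonzero `θ` with `θ x < 1` on the support. -/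
def ΘDom (ν : Measure ℝ) : Set ℝ := {θ | θ ≠ 0 ∧ ∀ x ∈ msupp ν, θ * x < 1}

/-- Right-sided parameter domain `(0, θ₊)`. -/
def ΘPlus (ν : Measure ℝ) : Set ℝ := {θ | 0 < θ ∧ ∀ x ∈ msupp ν, θ * x < 1}

/-- `ψ_ν`, the inverse of the mean map `k_ν` on the parameter domain. -/
def ψcs (ν : Measure ℝ) : ℝ → ℝ := Function.invFunOn (kcs ν) (ΘDom ν)

/-- `ψ_ν` for the right-sided family. -/
def ψplus (ν : Measure ℝ) : ℝ → ℝ := Function.invFunOn (kcs ν) (ΘPlus ν)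

/-- `ψ_ν` for the left-sided family (measures on `[0,∞)`, parameter `θ < 0`). -/
def ψminus (ν : Measure ℝ) : ℝ → ℝ := Function.invFunOn (kcs ν) (Iio 0)

/-- The pseudo-variance function `𝕍_ν(m) = m (1/ψ_ν(m) - m)`. -/
def pseudoVar (ν : Measure ℝ) (m : ℝ) : ℝ := m * (1 / ψcs ν m - m)

def pseudoVarMinus (ν : Measure ℝ) (m : ℝ) : ℝ := m * (1 / ψminus ν m - m)

/-- The tilted measure `P_{θ,ν}(dx) = ν(dx)/(M_ν(θ)(1-θx))`. -/
def tilt (ν : Measure ℝ) (θ : ℝ) : Measure ℝ :=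
  ν.withDensity (fun x => ENNReal.ofReal (1 / (Mcs ν θ * (1 - θ * x))))

/-- `Q_{m,ν}`, the element of the CSK family with mean `m`. -/
def Qcsk (ν : Measure ℝ) (m : ℝ) : Measure ℝ := tilt ν (ψcs ν m)

def QcskMinus (ν : Measure ℝ) (m : ℝ) : Measure ℝ := tilt ν (ψminus ν m)

/-- The variance function `V_ν(m) = ∫ (x-m)² dQ_{m,ν}(x)`. -/
def varFun (ν : Measure ℝ) (m : ℝ) : ℝ := ∫ x, (x - m) ^ 2 ∂(Qcsk ν m)

def varFunMinus (ν : Measure ℝ) (m : ℝ) : ℝ := ∫ x, (x - m) ^ 2 ∂(QcskMinus ν m)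

/-- Domain of means (two-sided). -/
def meanDom (ν : Measure ℝ) : Set ℝ := kcs ν '' ΘDom ν

/-- Right-sided domain of means `(m₀(ν), m₊(ν))`. -/
def meanDomPlus (ν : Measure ℝ) : Set ℝ := kcs ν '' ΘPlus ν

/-- Left-sided domain of means `(m₋(ν), m₀(ν))`. -/
def meanDomMinus (ν : Measure ℝ) : Set ℝ := kcs ν '' Iio 0

/-- `χ_ν`, the inverse of `Ψ_ν` on negative reals. -/
def χT (ν : Measure ℝ) : ℝ → ℝ := Function.invFunOn (PsiT ν) (Iio 0)

/-- The S-transform `S_ν(z) = χ_ν(z)(1+z)/z`. -/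
def Stransf (ν : Measure ℝ) (z : ℝ) : ℝ := χT ν z * (1 + z) / z

/-- `m₋(ν) = -1/G_ν(0)` for a measure on `[0,∞)`. -/
def mMinus (ν : Measure ℝ) : ℝ := -(Gcs ν 0)⁻¹

/-- The self-energy (K-transform) `K_ν(z) = z - 1/G_ν(z)`. -/
def KT (ν : Measure ℝ) (z : ℝ) : ℝ := z - 1 / Gcs ν z

/-- A measure is non-degenerate if it is not a Dirac mass. -/
def Nondeg (ν : Measure ℝ) : Prop := ∀ c : ℝ, ν ≠ Measure.dirac c
def pseudoVarPlus (ν : Measure ℝ) (m : ℝ) : ℝ := m * (1 / ψplus ν m - m)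

def QcskPlus (ν : Measure ℝ) (m : ℝ) : Measure ℝ := tilt ν (ψplus ν m)

def varFunPlus (ν : Measure ℝ) (m : ℝ) : ℝ := ∫ x, (x - m) ^ 2 ∂(QcskPlus ν m)

/-- The mean of a measure on `[0,∞)`, as an extended nonnegative real. -/
def m0E (ν : Measure ℝ) : ℝ≥0∞ := ∫⁻ x, ENNReal.ofReal x ∂ν

/-- The Σ-transform `Σ_ν(z) = S_ν(z/(1-z))`. -/
def SigmaT (ν : Measure ℝ) (z : ℝ) : ℝ := Stransf ν (z / (1 - z))

/-- The free Poisson (Marchenko–Pastur) law with density `(1/2π)√((4-x)/x)` on `(0,4)`. -/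
def freePoisson : Measure ℝ :=
  volume.withDensity (fun x => ENNReal.ofReal
    (Set.indicator (Ioo 0 4) (fun y => (1/(2*Real.pi)) * Real.sqrt ((4 - y)/y)) x))

/-! For `θ < 0` and `ν` supported on `[0,∞)` one has `Ψ_ν(θ) = M_ν(θ) - 1`. If `m = k_ν(θ) =
(M - 1)/(θ M)`, then `1/θ - m = 1/(θ M)`, so `m² / 𝕍_ν(m) = m θ M = M - 1 = Ψ_ν(θ)`. Because `ν`
charges `(0,∞)`, `M_ν` and hence `Ψ_ν` are strictly increasing on `θ ≤ 0`, so `χ_ν` recovers `θ`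
and `S_ν(Ψ_ν(θ)) = θ M/(M - 1) = 1/m`. -/

lemma integral_lt_integral_of_ae_le_of_measure_setOf_lt_ne_zero {α : Type*} [MeasurableSpace α]
    {μ : Measure α} {f g : α → ℝ} (hf : Integrable f μ) (hg : Integrable g μ)
    (hle : f ≤ᵐ[μ] g) (hlt : μ {x | f x < g x} ≠ 0) :
    ∫ x, f x ∂μ < ∫ x, g x ∂μ := by
  rw [← sub_pos, ← integral_sub hg hf,
    integral_pos_iff_support_of_nonneg_ae (f := fun x => g x - f x)
      (by filter_upwards [hle] with x hx using sub_nonneg.2 hx) (hg.sub hf)]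
  refine pos_iff_ne_zero.2 fun h => hlt (measure_mono_null (fun x hx => ?_) h)
  exact sub_ne_zero.2 (ne_of_gt hx)

lemma one_le_one_sub_mul {θ x : ℝ} (hθ : θ ≤ 0) (hx : 0 ≤ x) : 1 ≤ 1 - θ * x := by
  nlinarith

lemma ae_nonneg_of_measure_Iio_zero {ν : Measure ℝ} (hpos : ν (Iio 0) = 0) :
    ∀ᵐ x ∂ν, 0 ≤ x :=
  measure_eq_zero_iff_ae_notMem.1 hpos |>.mono fun _ hx => not_lt.1 hx

lemma measure_Ioi_zero_ne_zero {ν : Measure ℝ} [IsProbabilityMeasure ν]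
    (hpos : ν (Iio 0) = 0) (hatom : ν {0} < 1) : ν (Ioi 0) ≠ 0 := by
  intro h
  have hIci : ν (Ici 0) = 1 := by
    rw [← compl_Iio, prob_compl_eq_one_sub measurableSet_Iio, hpos, tsub_zero]
  have : ν (Ici 0) ≤ ν {0} + ν (Ioi 0) := by
    rw [← Ioi_insert, insert_eq]
    exact measure_union_le _ _
  rw [hIci, h, add_zero] at this
  exact hatom.not_ge this

section NonnegSupport

variable {ν : Measure ℝ} (hν : ∀ᵐ x ∂ν, 0 ≤ x) {θ : ℝ}
include hν

lemma integrable_one_div_one_sub_mul [IsFiniteMeasure ν] (hθ : θ ≤ 0) :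
    Integrable (fun x => 1 / (1 - θ * x)) ν := by
  refine (integrable_const 1).mono' (by fun_prop : Measurable _).aestronglyMeasurable ?_
  filter_upwards [hν] with x hx
  have h1 := one_le_one_sub_mul hθ hx
  rw [Real.norm_of_nonneg (by positivity)]
  exact div_le_one_of_le₀ h1 (by linarith)

lemma Mcs_pos [IsFiniteMeasure ν] [NeZero ν] (hθ : θ ≤ 0) : 0 < Mcs ν θ := by
  rw [Mcs, integral_pos_iff_support_of_nonneg_ae ?_ (integrable_one_div_one_sub_mul hν hθ)]
  · refine pos_iff_ne_zero.2 (frequently_ae_iff.1 (Eventually.frequently ?_))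
    filter_upwards [hν] with x hx
    exact (one_div_pos.2 (by linarith [one_le_one_sub_mul hθ hx])).ne'
  · filter_upwards [hν] with x hx
    exact (one_div_pos.2 (by linarith [one_le_one_sub_mul hθ hx])).le

lemma PsiT_eq_Mcs_sub_one [IsProbabilityMeasure ν] (hθ : θ ≤ 0) : PsiT ν θ = Mcs ν θ - 1 := by
  have hcongr : (fun x => θ * x / (1 - θ * x)) =ᵐ[ν] fun x => 1 / (1 - θ * x) - 1 := by
    filter_upwards [hν] with x hx
    have := one_le_one_sub_mul hθ hx
    field_simp
    ring
  rw [PsiT, integral_congr_ae hcongr,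
    integral_sub (integrable_one_div_one_sub_mul hν hθ) (integrable_const 1)]
  simp [Mcs]

lemma Mcs_strictMonoOn [IsFiniteMeasure ν] (hν₀ : ν (Ioi 0) ≠ 0) :
    StrictMonoOn (Mcs ν) (Iic 0) := by
  intro a (ha : a ≤ 0) b (hb : b ≤ 0) hab
  refine integral_lt_integral_of_ae_le_of_measure_setOf_lt_ne_zero
    (integrable_one_div_one_sub_mul hν ha) (integrable_one_div_one_sub_mul hν hb) ?_
    fun h => hν₀ (measure_mono_null (fun x (hx : 0 < x) => ?_) h)
  · filter_upwards [hν] with x hx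
    exact one_div_le_one_div_of_le (by linarith [one_le_one_sub_mul hb hx]) (by nlinarith)
  · show 1 / (1 - a * x) < 1 / (1 - b * x)
    exact one_div_lt_one_div_of_lt (by linarith [one_le_one_sub_mul hb hx.le]) (by nlinarith)

lemma PsiT_strictMonoOn [IsProbabilityMeasure ν] (hν₀ : ν (Ioi 0) ≠ 0) :
    StrictMonoOn (PsiT ν) (Iic 0) := by
  intro a ha b hb hab
  rw [PsiT_eq_Mcs_sub_one hν ha, PsiT_eq_Mcs_sub_one hν hb]
  exact sub_lt_sub_right (Mcs_strictMonoOn hν hν₀ ha hb hab) 1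

lemma χT_PsiT [IsProbabilityMeasure ν] (hν₀ : ν (Ioi 0) ≠ 0) (hθ : θ < 0) :
    χT ν (PsiT ν θ) = θ :=
  ((PsiT_strictMonoOn hν hν₀).mono Iio_subset_Iic_self).injOn.leftInvOn_invFunOn hθ

end NonnegSupport

lemma ψminus_spec {ν : Measure ℝ} {m : ℝ} (hm : m ∈ meanDomMinus ν) :
    ψminus ν m < 0 ∧ kcs ν (ψminus ν m) = m :=
  ⟨Function.invFunOn_mem hm, Function.invFunOn_eq hm⟩

lemma kcs_sq_div_mul_inv_sub_kcs {ν : Measure ℝ} {θ : ℝ} (hθ : θ ≠ 0) (hM : Mcs ν θ ≠ 0) :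
    kcs ν θ ^ 2 / (kcs ν θ * (1 / θ - kcs ν θ)) = Mcs ν θ - 1 := by
  by_cases hM1 : Mcs ν θ = 1
  · simp [kcs, hM1]
  have hM1' : Mcs ν θ - 1 ≠ 0 := sub_ne_zero.2 hM1
  simp only [kcs]
  field_simp
  ring

theorem Stransf_pseudoVar_general (ν : Measure ℝ) [IsProbabilityMeasure ν]
    (hpos : ν (Iio 0) = 0) (hatom : ν {0} < 1) :
    ∀ m ∈ meanDomMinus ν,
      Stransf ν (m ^ 2 / pseudoVarMinus ν m) = 1 / m := by
  have hν := ae_nonneg_of_measure_Iio_zero hpos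
  intro m hm
  obtain ⟨hθ, hkθ⟩ := ψminus_spec hm
  unfold pseudoVarMinus
  generalize ψminus ν m = θ at hθ hkθ ⊢
  subst hkθ
  rw [kcs_sq_div_mul_inv_sub_kcs hθ.ne (Mcs_pos hν hθ.le).ne', ← PsiT_eq_Mcs_sub_one hν hθ.le,
    Stransf, χT_PsiT hν (measure_Ioi_zero_ne_zero hpos hatom) hθ, PsiT_eq_Mcs_sub_one hν hθ.le,
    kcs, one_div_div]
  ring

/-- `S_ν(m²/𝕍_ν(m)) = 1/m` on the domain of means `(m₋(ν), m₀(ν))`. -/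
theorem Stransf_pseudoVar (ν : Measure ℝ) [IsProbabilityMeasure ν]
    (hnd : Nondeg ν) (hpos : ν (Iio 0) = 0) (hatom : ν {0} < 1) :
    ∀ m ∈ meanDomMinus ν,
      Stransf ν (m ^ 2 / pseudoVarMinus ν m) = 1 / m :=
  Stransf_pseudoVar_general ν hpos hatom
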